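/- Let E be an Archimedean vector lattice with the principal projection property, let x, y ∈ E, and let λ ∈ ℝ. If P_λ denotes the band projection onto the band generated by (x - λy)⁺, then λ·P_λ(y) ≤ P_λ(x). -/

import Mathlib

variable (E : Type*) [AddCommGroup E] [Lattice E] [Module ℝ E]
  [CovariantClass E E (· + ·) (· ≤ ·)] [PosSMulMono ℝ E]

/-- The order on order bounded operators: `A ≤ B` iff `A x ≤ B x` for all `x ≥ 0`. -/
def opLE (A B : E →ₗ[ℝ] E) : Prop := ∀ x : E, 0 ≤ x → A x ≤ B x

/-- An operator is order bounded when it maps order bounded sets to order bounded sets. -/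
def IsOrderBoundedOp (T : E →ₗ[ℝ] E) : Prop :=
  ∀ a b : E, ∃ c d : E, ∀ x : E, a ≤ x → x ≤ b → c ≤ T x ∧ T x ≤ d

/-- Band preserving: `T x` lies in the band generated by `x`; equivalently `T x ⊥ y`
whenever `x ⊥ y`. -/
def IsBandPreserving (T : E →ₗ[ℝ] E) : Prop :=
  ∀ x y : E, |x| ⊓ |y| = 0 → |T x| ⊓ |y| = 0

/-- An orthomorphism is an order bounded band preserving linear operator. -/
def IsOrthomorphism (T : E →ₗ[ℝ] E) : Prop :=
  IsOrderBoundedOp E T ∧ IsBandPreserving E T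

/-- Membership in the band generated by a set `S` (in an Archimedean vector lattice this is
the double disjoint complement of `S`). -/
def memBandGen (S : Set E) (w : E) : Prop :=
  ∀ u : E, (∀ s ∈ S, |u| ⊓ |s| = 0) → |u| ⊓ |w| = 0

/-- `P` is the band projection onto the band `B`: it maps into `B` and `x - P x` is
disjoint from `B` for every `x`. -/
def IsBandProjectionOnto (B : Set E) (P : E →ₗ[ℝ] E) : Prop :=
  (∀ x : E, P x ∈ B) ∧ (∀ x : E, ∀ b ∈ B, |x - P x| ⊓ |b| = 0)

/-- Order convergence of a net: there is a downward directed set `D` with infimum `0`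
such that the net is eventually dominated by every member of `D`. -/
def OrderConvNet {ι : Type*} [Preorder ι] (y : ι → E) (l : E) : Prop :=
  ∃ D : Set E, D.Nonempty ∧ DirectedOn (· ≥ ·) D ∧ IsGLB D 0 ∧
    ∀ d ∈ D, ∃ i₀ : ι, ∀ i : ι, i₀ ≤ i → |y i - l| ≤ d

/-- Unbounded order convergence of a net. -/
def UOConvNet {ι : Type*} [Preorder ι] (y : ι → E) (l : E) : Prop :=
  ∀ u : E, 0 ≤ u → OrderConvNet E (fun i => |y i - l| ⊓ u) 0

/-- Order convergence of a net of operators, in the operator order of the order bounded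
operators: there is a downward directed set `D` of operators whose infimum among the
order bounded operators is `0`, eventually dominating `|T i - L|`. -/
def OpOrderConvNet {ι : Type*} [Preorder ι] (T : ι → E →ₗ[ℝ] E) (L : E →ₗ[ℝ] E) : Prop :=
  ∃ D : Set (E →ₗ[ℝ] E), D.Nonempty ∧
    DirectedOn (fun A B => opLE E B A) D ∧
    (∀ d ∈ D, opLE E 0 d) ∧
    (∀ C : E →ₗ[ℝ] E, IsOrderBoundedOp E C → (∀ d ∈ D, opLE E C d) → opLE E C 0) ∧
    ∀ d ∈ D, ∃ i₀ : ι, ∀ i : ι, i₀ ≤ i → opLE E (L - T i) d ∧ opLE E (T i - L) d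

/-!
Write `z = x - λ y`, so that `P z = P x - λ P y` and `P z = P z⁺ - P z⁻`. Since `z⁻ ⊥ z⁺`, the
element `z⁻` is disjoint from the whole band generated by `z⁺`, so `P z⁻ = 0`; and any band
projection is positive, so `P z = P z⁺ ≥ 0`.
-/

section LatticeOrderedGroup

variable {α : Type*} [AddCommGroup α] [Lattice α] [AddLeftMono α]

lemma abs_add_inf_abs_eq_zero {a b c : α} (ha : |a| ⊓ |c| = 0) (hb : |b| ⊓ |c| = 0) :
    |a + b| ⊓ |c| = 0 := by
  have hle : |a + b| ⊓ |c| ≤ |a| ⊓ |c| + |b| ⊓ |c| := by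
    rw [inf_add, add_inf, add_inf]
    refine le_inf (le_inf ?_ ?_) (le_inf ?_ ?_)
    · exact inf_le_left.trans (abs_add_le a b)
    · exact inf_le_right.trans (le_add_of_nonneg_left (abs_nonneg a))
    · exact inf_le_right.trans (le_add_of_nonneg_right (abs_nonneg b))
    · exact inf_le_right.trans (le_add_of_nonneg_right (abs_nonneg c))
  rw [ha, hb, add_zero] at hle
  exact le_antisymm hle (le_inf (abs_nonneg _) (abs_nonneg _))

lemma nonneg_of_abs_inf_abs_eq_zero_of_nonneg_add {a b : α} (hab : |a| ⊓ |b| = 0)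
    (h : 0 ≤ a + b) : 0 ≤ a := by
  have hb : -a ≤ |b| := (neg_le_iff_add_nonneg'.mpr h).trans (le_abs_self b)
  have ha : a⁻ ≤ |a| ⊓ |b| :=
    le_inf (sup_le (neg_le_abs a) (abs_nonneg a)) (sup_le hb (abs_nonneg b))
  rw [hab] at ha
  exact negPart_eq_zero.mp (le_antisymm ha (negPart_nonneg a))

end LatticeOrderedGroup

namespace IsBandProjectionOnto

variable {F : Type*} [AddCommGroup F] [Lattice F] [Module ℝ F] [AddLeftMono F]
variable {B : Set F} {P : F →ₗ[ℝ] F}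

lemma map_nonneg (hP : IsBandProjectionOnto F B P) {u : F} (hu : 0 ≤ u) : 0 ≤ P u :=
  nonneg_of_abs_inf_abs_eq_zero_of_nonneg_add (by rw [inf_comm]; exact hP.2 u _ (hP.1 u))
    (by rwa [add_sub_cancel])

lemma map_eq_zero_of_disjoint (hP : IsBandProjectionOnto F B P) {u : F}
    (hu : ∀ b ∈ B, |u| ⊓ |b| = 0) : P u = 0 := by
  have h : |u + -(u - P u)| ⊓ |P u| = 0 :=
    abs_add_inf_abs_eq_zero (hu _ (hP.1 u)) (by rw [abs_neg]; exact hP.2 u _ (hP.1 u))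
  rw [← sub_eq_add_neg, sub_sub_cancel, inf_idem] at h
  exact le_antisymm ((le_abs_self _).trans h.le) (neg_nonpos.mp ((neg_le_abs _).trans h.le))

end IsBandProjectionOnto

theorem stmt0
    (x y : E) (l : ℝ) (P : E →ₗ[ℝ] E)
    (hP : IsBandProjectionOnto E {w | memBandGen E {(x - l • y) ⊔ 0} w} P) :
    l • P y ≤ P x := by
  set z := x - l • y
  have hPneg : P z⁻ = 0 := hP.map_eq_zero_of_disjoint fun w hw ↦ hw z⁻ <| by
    rintro s rfl
    rw [← posPart_def, abs_of_nonneg (negPart_nonneg z), abs_of_nonneg (posPart_nonneg z),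
      inf_comm, posPart_inf_negPart_eq_zero]
  have hPz : 0 ≤ P z := by
    rw [← posPart_sub_negPart z, map_sub, hPneg, sub_zero]
    exact hP.map_nonneg (posPart_nonneg z)
  rwa [map_sub, map_smul, sub_nonneg] at hPz
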